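/- arXiv:2407.03831 — 8 statements merged into one kernel-verified Lean document; each statement's English description precedes it below -/
import Mathlib

section
/- In a connected split graph G with split partition V = K ∪ I, if x is a vertex of K with maximum degree among vertices of K, then {x} ∪ (I \ N(x)) is a minimum independent dominating set, so i(G) = 1 + |I| - deg_I(x). -/
/-- `f` is an Independent Roman Dominating Function of `G`: values in {0,1,2},
every 0-labeled vertex has a 2-labeled neighbor, and no two adjacent vertices
are both positively labeled. -/
def IsIRDF {V : Type*} (G : SimpleGraph V) (f : V → ℕ) : Prop :=
  (∀ v, f v ≤ 2) ∧
  (∀ v, f v = 0 → ∃ u, G.Adj v u ∧ f u = 2) ∧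
  (∀ u v, G.Adj u v → f u = 0 ∨ f v = 0)

/-- The weight of a labeling. -/
def irdfWeight {V : Type*} [Fintype V] (f : V → ℕ) : ℕ := ∑ v, f v

/-- The independent Roman domination number. -/
noncomputable def iR {V : Type*} [Fintype V] (G : SimpleGraph V) : ℕ :=
  sInf {w | ∃ f : V → ℕ, IsIRDF G f ∧ irdfWeight f = w}

/-- `s` is an independent dominating set of `G`. -/
def IsIndepDom {V : Type*} (G : SimpleGraph V) (s : Finset V) : Prop :=
  (∀ u ∈ s, ∀ v ∈ s, ¬ G.Adj u v) ∧ (∀ v, v ∉ s → ∃ u ∈ s, G.Adj u v)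

/-- The independent domination number. -/
noncomputable def indepDomNum {V : Type*} [Fintype V] (G : SimpleGraph V) : ℕ :=
  sInf {n | ∃ s : Finset V, IsIndepDom G s ∧ s.card = n}


/-!
A vertex `y ∈ K` of an independent dominating set `s` excludes the rest of the clique from
`s`, so every vertex of `I \ N(y)` must lie in `s` to be dominated: `|s| ≥ 1 + |I| - deg_I(y)`.
Since `deg(y) = |K| - 1 + deg_I(y)` on `K`, this bound is smallest for `y = x`, where it is
attained.
An independent dominating set inside `I` is `I` itself, and as it must dominate `x`,
`deg_I(x) ≥ 1`, so it has at least `1 + |I| - deg_I(x)` elements as well.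
-/

section

variable {V : Type*} [Fintype V] {G : SimpleGraph V}

theorem indepDomNum_eq_card {s : Finset V} (hs : IsIndepDom G s)
    (hmin : ∀ t, IsIndepDom G t → s.card ≤ t.card) : indepDomNum G = s.card :=
  le_antisymm (Nat.sInf_le ⟨s, hs, rfl⟩)
    (le_csInf ⟨_, s, hs, rfl⟩ (by rintro _ ⟨t, ht, rfl⟩; exact hmin t ht))

variable [DecidableEq V]

structure SimpleGraph.IsSplitPartition
    (G : SimpleGraph V) (K I : Finset V) : Prop where
  union_eq_univ : K ∪ I = Finset.univ
  disjoint : Disjoint K I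
  isClique : G.IsClique (K : Set V)
  isIndepSet : G.IsIndepSet (I : Set V)

namespace SimpleGraph.IsSplitPartition

variable {K I s : Finset V} {x y v : V} (h : G.IsSplitPartition K I)
include h

theorem mem_right_of_notMem_left (hv : v ∉ K) : v ∈ I := by
  have hv' : v ∈ K ∪ I := h.union_eq_univ ▸ Finset.mem_univ v
  exact (Finset.mem_union.mp hv').resolve_left hv

theorem notMem_right_of_mem_left (hv : v ∈ K) : v ∉ I :=
  Finset.disjoint_left.mp h.disjoint hv

theorem not_adj_of_mem_right {u : V} (hu : u ∈ I) (hv : v ∈ I) : ¬G.Adj u v := fun huv =>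
  h.isIndepSet hu hv huv.ne huv

theorem eq_right_of_isIndepDom (hs : IsIndepDom G s) (hsK : ∀ v ∈ s, v ∉ K) : s = I := by
  have hsI : s ⊆ I := fun v hv => h.mem_right_of_notMem_left (hsK v hv)
  refine hsI.antisymm fun v hv => by_contra fun hvs => ?_
  obtain ⟨u, hus, huv⟩ := hs.2 v hvs
  exact h.not_adj_of_mem_right (hsI hus) hv huv

variable [DecidableRel G.Adj]

theorem isIndepDom_insert_sdiff_neighborFinset (hx : x ∈ K) :
    IsIndepDom G (insert x (I \ G.neighborFinset x)) := by
  simp only [IsIndepDom, Finset.mem_insert, Finset.mem_sdiff, mem_neighborFinset]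
  refine ⟨?_, fun v hv => ⟨x, Or.inl rfl, ?_⟩⟩
  · rintro u (rfl | ⟨hu, hxu⟩) w (rfl | ⟨hw, hxw⟩)
    exacts [G.irrefl, hxw, fun huw => hxu huw.symm, h.not_adj_of_mem_right hu hw]
  · push Not at hv
    by_cases hvK : v ∈ K
    · exact h.isClique hx hvK hv.1.symm
    · exact hv.2 (h.mem_right_of_notMem_left hvK)

theorem card_insert_sdiff_neighborFinset (hy : y ∈ K) :
    (insert y (I \ G.neighborFinset y)).card = 1 + I.card - (G.neighborFinset y ∩ I).card := by
  have hle : (G.neighborFinset y ∩ I).card ≤ I.card := Finset.card_le_card Finset.inter_subset_right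
  rw [Finset.card_insert_of_notMem
    fun hyI => h.notMem_right_of_mem_left hy (Finset.mem_sdiff.mp hyI).1, Finset.card_sdiff]
  omega

theorem degree_eq_of_mem_left (hy : y ∈ K) :
    G.degree y = K.card - 1 + (G.neighborFinset y ∩ I).card := by
  have hNK : G.neighborFinset y ∩ K = K.erase y := by
    ext v
    simp only [Finset.mem_inter, mem_neighborFinset, Finset.mem_erase]
    exact ⟨fun ⟨hyv, hv⟩ => ⟨hyv.ne.symm, hv⟩, fun ⟨hvy, hv⟩ => ⟨h.isClique hy hv hvy.symm, hv⟩⟩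
  calc G.degree y = (G.neighborFinset y ∩ K ∪ G.neighborFinset y ∩ I).card := by
        rw [← Finset.inter_union_distrib_left, h.union_eq_univ, Finset.inter_univ,
          card_neighborFinset_eq_degree]
    _ = K.card - 1 + (G.neighborFinset y ∩ I).card := by
        rw [Finset.card_union_of_disjoint
          (h.disjoint.mono Finset.inter_subset_right Finset.inter_subset_right),
          hNK, Finset.card_erase_of_mem hy]

theorem insert_sdiff_neighborFinset_subset (hs : IsIndepDom G s) (hys : y ∈ s) (hyK : y ∈ K) :
    insert y (I \ G.neighborFinset y) ⊆ s := by
  refine Finset.insert_subset hys fun v hv => ?_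
  rw [Finset.mem_sdiff, mem_neighborFinset] at hv
  by_contra hvs
  obtain ⟨u, hus, huv⟩ := hs.2 v hvs
  by_cases huK : u ∈ K
  · obtain rfl : u = y := by_contra fun huy => hs.1 u hus y hys (h.isClique huK hyK huy)
    exact hv.2 huv
  · exact h.not_adj_of_mem_right (h.mem_right_of_notMem_left huK) hv.1 huv

theorem card_le_of_isIndepDom (hx : x ∈ K) (hmax : ∀ y ∈ K, G.degree y ≤ G.degree x)
    (hs : IsIndepDom G s) : 1 + I.card - (G.neighborFinset x ∩ I).card ≤ s.card := by
  by_cases hsK : ∃ y ∈ s, y ∈ K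
  · obtain ⟨y, hys, hyK⟩ := hsK
    have hdeg := hmax y hyK
    rw [h.degree_eq_of_mem_left hx, h.degree_eq_of_mem_left hyK] at hdeg
    calc 1 + I.card - (G.neighborFinset x ∩ I).card
        ≤ 1 + I.card - (G.neighborFinset y ∩ I).card := by omega
      _ = (insert y (I \ G.neighborFinset y)).card := (h.card_insert_sdiff_neighborFinset hyK).symm
      _ ≤ s.card := Finset.card_le_card (h.insert_sdiff_neighborFinset_subset hs hys hyK)
  · push Not at hsK
    obtain rfl := h.eq_right_of_isIndepDom hs hsK
    obtain ⟨u, hus, hux⟩ := hs.2 x (h.notMem_right_of_mem_left hx)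
    have hpos : 0 < (G.neighborFinset x ∩ s).card :=
      Finset.card_pos.mpr ⟨u, Finset.mem_inter.mpr ⟨(G.mem_neighborFinset x u).mpr hux.symm, hus⟩⟩
    omega

end SimpleGraph.IsSplitPartition

end

theorem split_min_indep_dom_general {V : Type*} [Fintype V] [DecidableEq V]
    (G : SimpleGraph V) [DecidableRel G.Adj] (K I : Finset V)
    (hpart : K ∪ I = Finset.univ) (hdisj : Disjoint K I)
    (hK : ∀ u ∈ K, ∀ v ∈ K, u ≠ v → G.Adj u v)
    (hI : ∀ u ∈ I, ∀ v ∈ I, ¬ G.Adj u v)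
    (x : V) (hx : x ∈ K) (hmax : ∀ y ∈ K, G.degree y ≤ G.degree x) :
    IsIndepDom G (insert x (I \ G.neighborFinset x)) ∧
    (insert x (I \ G.neighborFinset x)).card = indepDomNum G ∧
    indepDomNum G = 1 + I.card - (G.neighborFinset x ∩ I).card := by
  have h : G.IsSplitPartition K I :=
    ⟨hpart, hdisj, fun u hu v hv => hK u hu v hv, fun u hu v hv _ => hI u hu v hv⟩
  have hS := h.isIndepDom_insert_sdiff_neighborFinset hx
  have hcard := h.card_insert_sdiff_neighborFinset hx
  have hmin := indepDomNum_eq_card hS fun t ht => hcard ▸ h.card_le_of_isIndepDom hx hmax ht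
  exact ⟨hS, hmin.symm, hmin.trans hcard⟩

/-- in a connected split graph, for a maximum-degree vertex `x` of the
clique `K`, the set `{x} ∪ (I \ N(x))` is a minimum independent dominating set, and
`i(G) = 1 + |I| - deg_I(x)`. -/
theorem split_min_indep_dom {V : Type*} [Fintype V] [DecidableEq V]
    (G : SimpleGraph V) [DecidableRel G.Adj] (K I : Finset V)
    (hpart : K ∪ I = Finset.univ) (hdisj : Disjoint K I)
    (hK : ∀ u ∈ K, ∀ v ∈ K, u ≠ v → G.Adj u v)
    (hI : ∀ u ∈ I, ∀ v ∈ I, ¬ G.Adj u v)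
    (hconn : G.Connected)
    (x : V) (hx : x ∈ K) (hmax : ∀ y ∈ K, G.degree y ≤ G.degree x) :
    IsIndepDom G (insert x (I \ G.neighborFinset x)) ∧
    (insert x (I \ G.neighborFinset x)).card = indepDomNum G ∧
    indepDomNum G = 1 + I.card - (G.neighborFinset x ∩ I).card :=
  split_min_indep_dom_general G K I hpart hdisj hK hI x hx hmax
end

section
/- Let G be a thin spider with spider partition (S, C, R) and R nonempty. Then i_R(G) = |C| + 1. -/
section Spider

variable {V : Type*} [Fintype V] [DecidableEq V] (G : SimpleGraph V)
  {l : ℕ} (c s : Fin l → V) (R : Finset V)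

/-- The spider partition data: `c` enumerates the clique `C`, `s` the independent
set `S`, `R` is the head (the remaining vertices), every vertex of `R` is adjacent
to every vertex of `C` and to no vertex of `S`. -/
def IsSpiderPartition : Prop :=
  2 ≤ l ∧ Function.Injective c ∧ Function.Injective s ∧
  (∀ i j, c i ≠ s j) ∧
  (∀ v, v ∈ R ↔ ∀ i, v ≠ c i ∧ v ≠ s i) ∧
  (∀ i j, i ≠ j → G.Adj (c i) (c j)) ∧
  (∀ i j, ¬ G.Adj (s i) (s j)) ∧
  (∀ v ∈ R, ∀ i, G.Adj v (c i)) ∧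
  (∀ v ∈ R, ∀ i, ¬ G.Adj v (s i))

/-- A thin spider: `N(s i) = {c i}`. -/
def IsThinSpider : Prop :=
  IsSpiderPartition G c s R ∧ ∀ i v, G.Adj (s i) v ↔ v = c i

/-- A thick spider: `N(s i) = C \ {c i}`. -/
def IsThickSpider : Prop :=
  IsSpiderPartition G c s R ∧ ∀ i v, G.Adj (s i) v ↔ ∃ j, j ≠ i ∧ v = c j

end Spider

/-!
Labelling the centre `c i` with `2` and the other legs `s j` with `1` gives an IRDF of
weight `l + 1`: every remaining vertex is adjacent to `c i`, and the labelled vertices are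
pairwise non-adjacent. Conversely each leg `s j` is a pendant vertex at `c j`, so an IRDF
labels it positively unless `c j` carries a `2`. At most one centre carries a `2`, since the
centres form a clique; if one does, the weight is at least `2 + (l - 1)`. If none does, all `l`
legs are positive and a head vertex `r` contributes one more unit, either through its own
label or through a `2`-labelled neighbour, which cannot be a leg.
-/

section IRDF

variable {V : Type*} {G : SimpleGraph V} {f : V → ℕ}

namespace IsIRDF

theorem eq_zero_of_adj (hf : IsIRDF G f) {u v : V} (huv : G.Adj u v) (hu : f u = 2) :
    f v = 0 :=
  (hf.2.2 u v huv).resolve_left (by omega)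

theorem one_le_or_exists_adj_eq_two (hf : IsIRDF G f) (v : V) :
    1 ≤ f v ∨ ∃ u, G.Adj v u ∧ f u = 2 := by
  rcases Nat.eq_zero_or_pos (f v) with hv | hv
  · exact .inr (hf.2.1 v hv)
  · exact .inl hv

theorem one_le_or_eq_two_of_adj_iff (hf : IsIRDF G f) {u v : V}
    (hv : ∀ w, G.Adj v w ↔ w = u) : 1 ≤ f v ∨ f u = 2 := by
  rcases hf.one_le_or_exists_adj_eq_two v with h | ⟨w, hvw, hw⟩
  · exact .inl h
  · exact .inr ((hv w).1 hvw ▸ hw)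

end IsIRDF

theorem card_add_le_irdfWeight [Fintype V] (T : Finset V) {x : V} (hx : x ∉ T)
    (hT : ∀ v ∈ T, 1 ≤ f v) : T.card + f x ≤ irdfWeight f := by
  classical
  have hcard : T.card ≤ ∑ v ∈ T, f v := by
    simpa using Finset.card_nsmul_le_sum T f 1 hT
  calc T.card + f x ≤ ∑ v ∈ insert x T, f v := by
        rw [Finset.sum_insert hx]; omega
    _ ≤ irdfWeight f := Finset.sum_le_sum_of_subset (Finset.subset_univ _)

theorem iR_eq_of_isIRDF [Fintype V] {n : ℕ} (hf : IsIRDF G f) (hfn : irdfWeight f = n)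
    (hle : ∀ g, IsIRDF G g → n ≤ irdfWeight g) : iR G = n := by
  refine le_antisymm (Nat.sInf_le ⟨f, hf, hfn⟩) (le_csInf ⟨n, f, hf, hfn⟩ ?_)
  rintro w ⟨g, hg, rfl⟩
  exact hle g hg

variable [DecidableEq V]

def twoOneLabelling (u : V) (T : Finset V) (v : V) : ℕ :=
  if v = u then 2 else if v ∈ T then 1 else 0

theorem isIRDF_twoOneLabelling {u : V} {T : Finset V}
    (hindep : G.IsIndepSet ↑(insert u T)) (hdom : ∀ v, v ≠ u → v ∉ T → G.Adj v u) :
    IsIRDF G (twoOneLabelling u T) := by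
  refine ⟨fun v => by unfold twoOneLabelling; split_ifs <;> omega, fun v hv => ?_, ?_⟩
  · refine ⟨u, hdom v (fun h => ?_) (fun h => ?_), by simp [twoOneLabelling]⟩ <;>
      simp only [twoOneLabelling] at hv <;> split_ifs at hv
  · intro v w hvw
    by_contra! h
    have hmem : ∀ x, twoOneLabelling u T x ≠ 0 → x ∈ insert u T := by
      intro x hx
      unfold twoOneLabelling at hx
      split_ifs at hx <;> simp_all
    exact hindep (hmem v h.1) (hmem w h.2) hvw.ne hvw

theorem irdfWeight_twoOneLabelling [Fintype V] {u : V} {T : Finset V} (hu : u ∉ T) :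
    irdfWeight (twoOneLabelling u T) = T.card + 2 := by
  have hsplit : ∀ v, twoOneLabelling u T v =
      (if v = u then 2 else 0) + (if v ∈ T then 1 else 0) := by
    intro v
    unfold twoOneLabelling
    split_ifs <;> simp_all
  simp only [irdfWeight, hsplit, Finset.sum_add_distrib, Finset.sum_ite_eq', Finset.sum_boole]
  simp [add_comm]

end IRDF

def otherLegs {V : Type*} [DecidableEq V] {l : ℕ} (s : Fin l → V) (i : Fin l) : Finset V :=
  (Finset.univ.erase i).image s

namespace IsThinSpider

variable {V : Type*} {G : SimpleGraph V} {l : ℕ} {c s : Fin l → V} {R : Finset V}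

theorem adj_leg_iff (hG : IsThinSpider G c s R) (i j : Fin l) :
    G.Adj (s i) (c j) ↔ i = j := by
  obtain ⟨⟨-, hc, -⟩, hthin⟩ := hG
  rw [hthin, hc.eq_iff, eq_comm]

theorem mem_head_or_exists (hG : IsThinSpider G c s R) (v : V) :
    v ∈ R ∨ ∃ i, v = c i ∨ v = s i := by
  obtain ⟨⟨-, -, -, -, hRmem, -⟩, -⟩ := hG
  by_contra! h
  exact h.1 ((hRmem v).2 h.2)

variable [DecidableEq V]

theorem mem_otherLegs (hG : IsThinSpider G c s R) {i j : Fin l} :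
    s j ∈ otherLegs s i ↔ j ≠ i := by
  obtain ⟨⟨-, -, hs, -⟩, -⟩ := hG
  simp [otherLegs, hs.eq_iff]

theorem center_notMem_otherLegs (hG : IsThinSpider G c s R) (i : Fin l) :
    c i ∉ otherLegs s i := by
  obtain ⟨⟨-, -, -, hcs, -⟩, -⟩ := hG
  simpa [otherLegs] using fun j _ => (hcs i j).symm

theorem card_otherLegs (hG : IsThinSpider G c s R) (i : Fin l) :
    (otherLegs s i).card = l - 1 := by
  obtain ⟨⟨-, -, hs, -⟩, -⟩ := hG
  simp [otherLegs, Finset.card_image_of_injective _ hs]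

theorem add_one_le_irdfWeight [Fintype V] (hG : IsThinSpider G c s R) (hR : R.Nonempty)
    {g : V → ℕ} (hg : IsIRDF G g) : l + 1 ≤ irdfWeight g := by
  have ⟨⟨_, _, hs, _, hRmem, hcc, _, _, hRs⟩, hthin⟩ := hG
  have hlegs_pos : ∀ j, g (c j) ≠ 2 → 1 ≤ g (s j) := fun j =>
    (hg.one_le_or_eq_two_of_adj_iff (hthin j)).resolve_right
  by_cases hc2 : ∃ i, g (c i) = 2
  · obtain ⟨i, hi⟩ := hc2
    have hlegs : ∀ v ∈ otherLegs s i, 1 ≤ g v := by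
      simp only [otherLegs, Finset.mem_image, Finset.mem_erase, Finset.mem_univ, and_true]
      rintro _ ⟨j, hji, rfl⟩
      refine hlegs_pos j ?_
      rw [hg.eq_zero_of_adj (hcc i j hji.symm) hi]
      omega
    have := card_add_le_irdfWeight _ (hG.center_notMem_otherLegs i) hlegs
    rw [hG.card_otherLegs, hi] at this
    have := i.pos
    omega
  · simp only [not_exists] at hc2
    have hlegs : ∀ v ∈ Finset.univ.image s, 1 ≤ g v := by
      simp only [Finset.mem_image, Finset.mem_univ, true_and]
      rintro _ ⟨j, rfl⟩
      exact hlegs_pos j (hc2 j)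
    -- A head vertex is labelled positively, or is dominated by a `2` off the legs.
    obtain ⟨r, hr⟩ := hR
    obtain ⟨x, hx, hgx⟩ : ∃ x, (∀ j, s j ≠ x) ∧ 1 ≤ g x := by
      rcases hg.one_le_or_exists_adj_eq_two r with h | ⟨u, hru, hu⟩
      · exact ⟨r, fun j => ((hRmem r).1 hr j).2.symm, h⟩
      · exact ⟨u, fun j hj => hRs r hr j (hj ▸ hru), by omega⟩
    have := card_add_le_irdfWeight _ (by simpa using hx) hlegs
    rw [Finset.card_image_of_injective _ hs, Finset.card_univ, Fintype.card_fin] at this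
    omega

theorem isIRDF_twoOneLabelling (hG : IsThinSpider G c s R) (i : Fin l) :
    IsIRDF G (twoOneLabelling (c i) (otherLegs s i)) := by
  have ⟨⟨_, _, _, _, _, hcc, hss, hRc, _⟩, hthin⟩ := hG
  have hleg : ∀ j k, G.Adj (s j) (c k) → j = k := fun j k h => (hG.adj_leg_iff j k).1 h
  apply _root_.isIRDF_twoOneLabelling
  · intro x hx y hy _ hxy
    simp only [otherLegs, Finset.coe_insert, Finset.coe_image, Finset.coe_erase,
      Finset.coe_univ, Set.mem_insert_iff, Set.mem_image, Set.mem_sdiff, Set.mem_univ,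
      Set.mem_singleton_iff, true_and] at hx hy
    rcases hx with rfl | ⟨j, hj, rfl⟩ <;> rcases hy with rfl | ⟨k, hk, rfl⟩
    · exact G.irrefl hxy
    · exact hk (hleg k i hxy.symm)
    · exact hj (hleg j i hxy)
    · exact hss j k hxy
  · intro v hvc hvT
    rcases hG.mem_head_or_exists v with hv | ⟨j, rfl | rfl⟩
    · exact hRc v hv i
    · exact hcc j i (fun h => hvc (h ▸ rfl))
    · obtain rfl : j = i := by_contra fun h => hvT ((hG.mem_otherLegs).2 h)
      exact (hthin j _).2 rfl

end IsThinSpider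

/-- a thin spider with nonempty head has `i_R(G) = |C| + 1`. -/
theorem iR_thin_spider {V : Type*} [Fintype V] [DecidableEq V]
    (G : SimpleGraph V) {l : ℕ} (c s : Fin l → V) (R : Finset V)
    (hspider : IsThinSpider G c s R) (hR : R.Nonempty) :
    iR G = l + 1 := by
  have hl : 0 < l := by have := hspider.1.1; omega
  let i : Fin l := ⟨0, hl⟩
  refine iR_eq_of_isIRDF (hspider.isIRDF_twoOneLabelling i) ?_
    fun g hg => hspider.add_one_le_irdfWeight hR hg
  rw [irdfWeight_twoOneLabelling (hspider.center_notMem_otherLegs i), hspider.card_otherLegs]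
  omega
end

section
/- Let G be a thick spider with spider partition (S, C, R) and R nonempty. Then i_R(G) = 3. -/
/-! An IRDF of weight at most `2` either puts `2` on a vertex adjacent to all others, or has no
`2` at all, hence is positive everywhere, which independence forbids as soon as there is an edge.
A thick spider has the edge `c₀c₁` and no universal vertex (`c i` misses `s i`, `s i` misses
`c i`, `R` misses `S`), so `i_R ≥ 3`. Conversely `c₀` is adjacent to everything except `s₀`, so
`2` on `c₀` and `1` on `s₀` is an IRDF of weight `3`. -/

section IRDF

variable {V : Type*} {G : SimpleGraph V} {f : V → ℕ}

lemma add_le_irdfWeight [Fintype V] (f : V → ℕ) {x y : V} (hxy : x ≠ y) :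
    f x + f y ≤ irdfWeight f := by
  classical
  simpa [irdfWeight, Finset.sum_pair hxy] using
    Finset.sum_le_sum_of_subset (f := f) (Finset.subset_univ {x, y})

lemma IsIRDF.three_le_irdfWeight [Fintype V] (hf : IsIRDF G f) {a b : V} (hab : G.Adj a b)
    (hnu : ∀ v, ∃ u ≠ v, ¬ G.Adj v u) : 3 ≤ irdfWeight f := by
  obtain ⟨-, hdom, hind⟩ := hf
  by_cases htwo : ∃ v, f v = 2
  · obtain ⟨v, hv⟩ := htwo
    by_contra! hlt
    obtain ⟨u, hne, hnadj⟩ := hnu v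
    have hu : f u = 0 := by have := add_le_irdfWeight f hne.symm; omega
    obtain ⟨w, huw, hw⟩ := hdom u hu
    have hwv : w = v := by
      by_contra hwv
      have := add_le_irdfWeight f hwv
      omega
    exact hnadj (hwv ▸ huw.symm)
  · push Not at htwo
    rcases hind a b hab with h | h <;>
      · obtain ⟨w, -, hw⟩ := hdom _ h
        exact absurd hw (htwo w)

lemma iR_eq_irdfWeight [Fintype V] (hf : IsIRDF G f)
    (hmin : ∀ g, IsIRDF G g → irdfWeight f ≤ irdfWeight g) : iR G = irdfWeight f :=
  le_antisymm (Nat.sInf_le ⟨f, hf, rfl⟩)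
    (le_csInf ⟨_, f, hf, rfl⟩ (by rintro _ ⟨g, hg, rfl⟩; exact hmin g hg))

lemma isIRDF_single_two_add_single_one [DecidableEq V] {u w : V} (huw : u ≠ w)
    (hnadj : ¬ G.Adj u w) (hdom : ∀ v, v ≠ u → v ≠ w → G.Adj v u) :
    IsIRDF G (Pi.single u 2 + Pi.single w 1) := by
  have hpos : ∀ v, (Pi.single u 2 + Pi.single w 1 : V → ℕ) v ≠ 0 → v = u ∨ v = w := by
    intro v hv
    by_contra! h
    simp [h.1, h.2] at hv
  refine ⟨fun v => ?_, fun v hv => ?_, fun x y hxy => ?_⟩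
  · simp only [Pi.add_apply, Pi.single_apply]
    split_ifs <;> simp_all
  · have hvu : v ≠ u := by rintro rfl; simp at hv
    have hvw : v ≠ w := by rintro rfl; simp at hv
    exact ⟨u, hdom v hvu hvw, by simp [huw.symm]⟩
  · by_contra! h
    rcases hpos x h.1 with rfl | rfl <;> rcases hpos y h.2 with rfl | rfl
    all_goals first | exact G.irrefl hxy | exact hnadj hxy | exact hnadj hxy.symm

lemma irdfWeight_single_two_add_single_one [Fintype V] [DecidableEq V] (u w : V) :
    irdfWeight (Pi.single u 2 + Pi.single w 1 : V → ℕ) = 3 := by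
  simp [irdfWeight, Finset.sum_add_distrib]

lemma iR_eq_three [Fintype V] {a b u w : V} (hab : G.Adj a b) (hnu : ∀ v, ∃ x ≠ v, ¬ G.Adj v x)
    (huw : u ≠ w) (hnadj : ¬ G.Adj u w) (hdom : ∀ v, v ≠ u → v ≠ w → G.Adj v u) :
    iR G = 3 := by
  classical
  rw [← irdfWeight_single_two_add_single_one u w]
  exact iR_eq_irdfWeight (isIRDF_single_two_add_single_one huw hnadj hdom)
    fun g hg => (irdfWeight_single_two_add_single_one u w).trans_le (hg.three_le_irdfWeight hab hnu)

end IRDF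

section ThickSpider

variable {V : Type*} {G : SimpleGraph V} {l : ℕ} {c s : Fin l → V} {R : Finset V}

lemma IsSpiderPartition.mem_or_exists (h : IsSpiderPartition G c s R) (v : V) :
    v ∈ R ∨ ∃ i, v = c i ∨ v = s i := by
  by_contra! hv
  exact hv.1 ((h.2.2.2.2.1 v).2 fun i => hv.2 i)

namespace IsThickSpider

lemma not_adj_s_c (h : IsThickSpider G c s R) (i : Fin l) : ¬ G.Adj (s i) (c i) := by
  rw [h.2]
  rintro ⟨j, hji, hij⟩
  exact hji (h.1.2.1 hij).symm

lemma exists_ne_not_adj (h : IsThickSpider G c s R) (i₀ : Fin l) (v : V) :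
    ∃ u ≠ v, ¬ G.Adj v u := by
  obtain ⟨-, -, -, hcs, hR, -, -, -, hRs⟩ := h.1
  rcases h.1.mem_or_exists v with hv | ⟨i, rfl | rfl⟩
  · exact ⟨s i₀, ((hR v).1 hv i₀).2.symm, hRs v hv i₀⟩
  · exact ⟨s i, (hcs i i).symm, fun hadj => h.not_adj_s_c i hadj.symm⟩
  · exact ⟨c i, hcs i i, h.not_adj_s_c i⟩

lemma adj_c (h : IsThickSpider G c s R) {i : Fin l} {v : V} (hc : v ≠ c i) (hs : v ≠ s i) :
    G.Adj v (c i) := by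
  obtain ⟨-, -, -, -, -, hcc, -, hRc, -⟩ := h.1
  rcases h.1.mem_or_exists v with hv | ⟨j, rfl | rfl⟩
  · exact hRc _ hv i
  · exact hcc j i fun hji => hc (hji ▸ rfl)
  · exact (h.2 j (c i)).2 ⟨i, fun hij => hs (hij ▸ rfl), rfl⟩

end IsThickSpider

end ThickSpider

theorem iR_thick_spider_general {V : Type*} [Fintype V]
    (G : SimpleGraph V) {l : ℕ} (c s : Fin l → V) (R : Finset V)
    (hspider : IsThickSpider G c s R) :
    iR G = 3 := by
  obtain ⟨hl, -, -, hcs, -, hcc, -⟩ := hspider.1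
  let i₀ : Fin l := ⟨0, by omega⟩
  let i₁ : Fin l := ⟨1, by omega⟩
  exact iR_eq_three (hcc i₀ i₁ (by simp [i₀, i₁, Fin.ext_iff])) (hspider.exists_ne_not_adj i₀)
    (hcs i₀ i₀) (fun h => hspider.not_adj_s_c i₀ h.symm) fun _ => hspider.adj_c

/-- a thick spider with nonempty head has `i_R(G) = 3`. -/
theorem iR_thick_spider {V : Type*} [Fintype V] [DecidableEq V]
    (G : SimpleGraph V) {l : ℕ} (c s : Fin l → V) (R : Finset V)
    (hspider : IsThickSpider G c s R) (hR : R.Nonempty) :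
    iR G = 3 :=
  iR_thick_spider_general G c s R hspider
end

section
/- For a thin spider G with partition (S, C, R) and R nonempty, the independent domination number is i(G) = |C|; moreover {c_i} ∪ (S \ {s_i}) is a minimum independent dominating set for any i. -/
/-- for a thin spider with nonempty head, `i(G) = |C|`, and for every
`i` the set `{c i} ∪ (S \ {s i})` is a minimum independent dominating set. -/
theorem indepDomNum_thin_spider {V : Type*} [Fintype V] [DecidableEq V]
    (G : SimpleGraph V) {l : ℕ} (c s : Fin l → V) (R : Finset V)
    (hspider : IsThinSpider G c s R) (hR : R.Nonempty) :
    indepDomNum G = l ∧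
    ∀ i : Fin l,
      IsIndepDom G (insert (c i) ((Finset.univ.image s).erase (s i))) ∧
      (insert (c i) ((Finset.univ.image s).erase (s i))).card = indepDomNum G := by
  classical
  obtain ⟨⟨hl2, hcinj, hsinj, hcs, hRmem, hCC, hSS, hRC, hRS⟩, hN⟩ := hspider
  have key : ∀ i, IsIndepDom G (insert (c i) ((Finset.univ.image s).erase (s i))) := by
    intro i
    constructor
    · intro u hu v hv hadj
      simp only [Finset.mem_insert, Finset.mem_erase, Finset.mem_image,
        Finset.mem_univ, true_and] at hu hv
      rcases hu with rfl | ⟨hu1, j, rfl⟩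
      · rcases hv with rfl | ⟨hv1, k, rfl⟩
        · exact G.loopless.irrefl _ hadj
        · have := (hN k (c i)).mp hadj.symm
          exact hv1 (by rw [hcinj this])
      · rcases hv with rfl | ⟨hv1, k, rfl⟩
        · have := (hN j (c i)).mp hadj
          exact hu1 (by rw [hcinj this])
        · exact hSS j k hadj
    · intro v hv
      simp only [Finset.mem_insert, Finset.mem_erase, Finset.mem_image,
        Finset.mem_univ, true_and] at hv
      push_neg at hv
      by_cases hvR : v ∈ R
      · exact ⟨c i, Finset.mem_insert_self _ _, (hRC v hvR i).symm⟩
      · rw [hRmem] at hvR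
        simp only [not_forall, not_and_or, not_ne_iff] at hvR
        obtain ⟨j, hj | hj⟩ := hvR
        · subst hj
          have hji : j ≠ i := fun h => hv.1 (by rw [h])
          exact ⟨c i, Finset.mem_insert_self _ _, hCC i j (Ne.symm hji)⟩
        · subst hj
          by_cases hji : j = i
          · subst hji
            exact ⟨c j, Finset.mem_insert_self _ _, ((hN j (c j)).mpr rfl).symm⟩
          · exact absurd rfl (hv.2 (fun h => hji (hsinj h)) j)
  have hcard : ∀ i, (insert (c i) ((Finset.univ.image s).erase (s i))).card = l := by
    intro i
    rw [Finset.card_insert_of_notMem, Finset.card_erase_of_mem,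
        Finset.card_image_of_injective _ hsinj, Finset.card_univ, Fintype.card_fin]
    · omega
    · simp
    · simp only [Finset.mem_erase, Finset.mem_image, Finset.mem_univ, true_and]
      rintro ⟨_, j, hj⟩
      exact hcs i j hj.symm
  have hlb : ∀ n ∈ {n | ∃ D : Finset V, IsIndepDom G D ∧ D.card = n}, l ≤ n := by
    rintro n ⟨D, ⟨hind, hdom⟩, rfl⟩
    have hpick : ∀ j : Fin l, (if s j ∈ D then s j else c j) ∈ D := by
      intro j
      split_ifs with h
      · exact h
      · obtain ⟨u, hu, hadj⟩ := hdom (s j) h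
        rwa [← (hN j u).mp hadj.symm]
    have hinj : Function.Injective (fun j : Fin l => if s j ∈ D then s j else c j) := by
      intro j k hjk
      simp only at hjk
      split_ifs at hjk with h1 h2 h2
      · exact hsinj hjk
      · exact absurd hjk.symm (hcs k j)
      · exact absurd hjk (hcs j k)
      · exact hcinj hjk
    calc l = (Finset.univ : Finset (Fin l)).card := by simp
      _ ≤ D.card := Finset.card_le_card_of_injOn _ (fun j _ => hpick j)
            (Function.Injective.injOn hinj)
  have i0 : Fin l := ⟨0, by omega⟩
  have hmem : l ∈ {n | ∃ D : Finset V, IsIndepDom G D ∧ D.card = n} :=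
    ⟨_, key i0, hcard i0⟩
  have hiv : indepDomNum G = l :=
    le_antisymm (Nat.sInf_le hmem) (le_csInf ⟨l, hmem⟩ hlb)
  exact ⟨hiv, fun i => ⟨key i, by rw [hiv, hcard i]⟩⟩
end

section
/- For a thick spider G with partition (S, C, R) where l ≥ 3, the set {c_1, s_1} is a minimum independent dominating set, so i(G) = 2. -/
/-- for a thick spider with `l ≥ 3`, the pair `{c i, s i}` is a
minimum independent dominating set, so `i(G) = 2`. -/
theorem indepDomNum_thick_spider {V : Type*} [Fintype V] [DecidableEq V]
    (G : SimpleGraph V) {l : ℕ} (c s : Fin l → V) (R : Finset V)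
    (hspider : IsThickSpider G c s R) (hl : 3 ≤ l) (i : Fin l) :
    IsIndepDom G {c i, s i} ∧ ({c i, s i} : Finset V).card = indepDomNum G ∧
    indepDomNum G = 2 := by
  obtain ⟨⟨hl2, hcinj, hsinj, hcs, hRmem, hCC, hSS, hRC, hRS⟩, hthick⟩ := hspider
  have hadjsc : ∀ j k : Fin l, G.Adj (s j) (c k) ↔ k ≠ j := by
    intro j k
    rw [hthick]
    constructor
    · rintro ⟨m, hm, hmk⟩ rfl
      exact hm (hcinj hmk.symm)
    · intro h; exact ⟨k, h, rfl⟩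
  have hcsne : c i ≠ s i := hcs i i
  have hindep : IsIndepDom G {c i, s i} := by
    constructor
    · intro u hu v hv
      simp only [Finset.mem_insert, Finset.mem_singleton] at hu hv
      rcases hu with rfl | rfl <;> rcases hv with rfl | rfl
      · exact G.loopless.irrefl _
      · intro h
        exact absurd ((hadjsc i i).mp h.symm) (by simp)
      · intro h
        exact absurd ((hadjsc i i).mp h) (by simp)
      · exact hSS i i
    · intro v hv
      simp only [Finset.mem_insert, Finset.mem_singleton, not_or] at hv
      by_cases hvR : v ∈ R
      · exact ⟨c i, by simp, (hRC v hvR i).symm⟩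
      · rw [hRmem] at hvR
        push_neg at hvR
        obtain ⟨j, hj⟩ := hvR
        by_cases hc : v = c j
        · have hij : i ≠ j := by rintro rfl; exact hv.1 hc
          exact ⟨c i, by simp, hc ▸ hCC i j hij⟩
        · have hs' : v = s j := hj hc
          have hij : i ≠ j := by rintro rfl; exact hv.2 hs'
          exact ⟨c i, by simp, hs' ▸ ((hadjsc j i).mpr hij).symm⟩
  have hcard : ({c i, s i} : Finset V).card = 2 := Finset.card_pair hcsne
  have hmem : 2 ∈ {n | ∃ t : Finset V, IsIndepDom G t ∧ t.card = n} :=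
    ⟨{c i, s i}, hindep, hcard⟩
  have hle : indepDomNum G ≤ 2 := Nat.sInf_le hmem
  have hge : 2 ≤ indepDomNum G := by
    apply le_csInf ⟨2, hmem⟩
    rintro n ⟨t, ⟨htind, htdom⟩, rfl⟩
    by_contra hlt
    push_neg at hlt
    have h01 : t.card = 0 ∨ t.card = 1 := by omega
    rcases h01 with h0 | h1
    · obtain ⟨u, hu, -⟩ := htdom (c i) (by simp [Finset.card_eq_zero.mp h0])
      simp [Finset.card_eq_zero.mp h0] at hu
    · obtain ⟨v, rfl⟩ := Finset.card_eq_one.mp h1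
      -- find a witness w ≠ v with ¬ G.Adj v w
      have key : ∃ w, w ≠ v ∧ ¬ G.Adj v w := by
        by_cases hvR : v ∈ R
        · exact ⟨s i, fun h => ((hRmem v).mp hvR i).2 h.symm, hRS v hvR i⟩
        · rw [hRmem] at hvR
          push_neg at hvR
          obtain ⟨j, hj⟩ := hvR
          by_cases hc : v = c j
          · refine ⟨s j, fun h => hcs j j (hc ▸ h.symm), ?_⟩
            intro h
            exact absurd ((hadjsc j j).mp (hc ▸ h).symm) (by simp)
          · have hj : v = s j := hj hc
            obtain ⟨k, hk⟩ : ∃ k : Fin l, k ≠ j := by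
              by_cases hj0 : j = ⟨0, by omega⟩
              · exact ⟨⟨1, by omega⟩, by rw [hj0]; simp [Fin.ext_iff]⟩
              · exact ⟨⟨0, by omega⟩, fun h => hj0 h.symm⟩
            refine ⟨s k, fun h => hk (hsinj (hj ▸ h)), ?_⟩
            intro h
            exact hSS j k (hj ▸ h)
      obtain ⟨w, hwv, hnadj⟩ := key
      obtain ⟨u, hu, hadj⟩ := htdom w (by simp [hwv])
      simp only [Finset.mem_singleton] at hu
      exact hnadj (hu ▸ hadj)
  refine ⟨hindep, ?_, ?_⟩ <;> omega
end

section
/- If G is a spider (thin or thick) with nonempty head R, then i(G) < i_R(G). -/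
/-!
In any graph, the positive vertices of an independent Roman dominating function `f` form an
independent dominating set. Once the graph has an edge `ab`, one of `a, b` is labelled `0`
and so has a neighbour labelled `2`; hence this set has fewer elements than the weight of `f`,
and `i(G) < i_R(G)` (the infimum defining `i_R` is attained, since twice the indicator of a
maximal independent set is such a function). A spider has an edge inside its clique.
-/

section

variable {V : Type*} {G : SimpleGraph V}

theorem exists_isIndepDom [Finite V] (G : SimpleGraph V) : ∃ s : Finset V, IsIndepDom G s := by
  classical
  obtain ⟨t, -, hmax⟩ := Finite.exists_le_maximal
    (p := fun t : Finset V => ∀ u ∈ t, ∀ v ∈ t, ¬ G.Adj u v) (a := ∅) (by simp)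
  refine ⟨t, hmax.prop, fun v hv => ?_⟩
  by_contra! hfar
  have hindep : ∀ u ∈ insert v t, ∀ w ∈ insert v t, ¬ G.Adj u w := by
    simp only [Finset.mem_insert]
    rintro u (rfl | hu) w (rfl | hw)
    · exact G.irrefl
    · exact fun h => hfar w hw h.symm
    · exact hfar u hu
    · exact hmax.prop u hu w hw
  exact hv (hmax.2 hindep (Finset.subset_insert v t) (Finset.mem_insert_self v t))

theorem IsIndepDom.isIRDF [DecidableEq V] {s : Finset V} (hs : IsIndepDom G s) :
    IsIRDF G (fun v => if v ∈ s then 2 else 0) := by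
  refine ⟨fun v => by dsimp only; split_ifs <;> simp, fun v hv => ?_, fun u v huv => ?_⟩
  · have hvs : v ∉ s := by simpa using hv
    obtain ⟨u, hu, huv⟩ := hs.2 v hvs
    exact ⟨u, huv.symm, if_pos hu⟩
  · by_contra! h
    simp only [ne_eq, ite_eq_right_iff, not_forall] at h
    exact hs.1 u h.1.1 v h.2.1 huv

theorem IsIRDF.isIndepDom_support [Fintype V] {f : V → ℕ} (hf : IsIRDF G f) :
    IsIndepDom G {v | f v ≠ 0} := by
  simp only [IsIndepDom, Finset.mem_filter, Finset.mem_univ, true_and, not_not]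
  refine ⟨fun u hu v hv huv => ?_, fun v hv => ?_⟩
  · rcases hf.2.2 u v huv with h | h <;> contradiction
  · obtain ⟨u, hvu, hu⟩ := hf.2.1 v hv
    exact ⟨u, by omega, hvu.symm⟩

theorem IsIRDF.exists_eq_two_of_adj {f : V → ℕ} (hf : IsIRDF G f) {a b : V} (hab : G.Adj a b) :
    ∃ u, f u = 2 := by
  rcases hf.2.2 a b hab with h | h
  · obtain ⟨u, -, hu⟩ := hf.2.1 a h
    exact ⟨u, hu⟩
  · obtain ⟨u, -, hu⟩ := hf.2.1 b h
    exact ⟨u, hu⟩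

theorem indepDomNum_lt_irdfWeight_of_adj [Fintype V] {f : V → ℕ} (hf : IsIRDF G f) {a b : V}
    (hab : G.Adj a b) : indepDomNum G < irdfWeight f := by
  set P : Finset V := {v | f v ≠ 0}
  obtain ⟨u, hu⟩ := hf.exists_eq_two_of_adj hab
  have huP : u ∈ P := by simp [P, hu]
  calc indepDomNum G ≤ P.card := Nat.sInf_le ⟨P, hf.isIndepDom_support, rfl⟩
    _ = ∑ v ∈ P, 1 := Finset.card_eq_sum_ones P
    _ < ∑ v ∈ P, f v := Finset.sum_lt_sum
        (fun v hv => Nat.one_le_iff_ne_zero.2 (Finset.mem_filter.1 hv).2) ⟨u, huP, by omega⟩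
    _ ≤ irdfWeight f := Finset.sum_le_sum_of_subset (Finset.subset_univ P)

theorem exists_isIRDF_irdfWeight_eq_iR [Fintype V] (G : SimpleGraph V) :
    ∃ f : V → ℕ, IsIRDF G f ∧ irdfWeight f = iR G := by
  classical
  obtain ⟨s, hs⟩ := exists_isIndepDom G
  exact Nat.sInf_mem (s := {w | ∃ f : V → ℕ, IsIRDF G f ∧ irdfWeight f = w}) ⟨_, _, hs.isIRDF, rfl⟩

theorem indepDomNum_lt_iR_of_adj [Fintype V] {a b : V} (hab : G.Adj a b) :
    indepDomNum G < iR G := by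
  obtain ⟨f, hf, hw⟩ := exists_isIRDF_irdfWeight_eq_iR G
  exact hw ▸ indepDomNum_lt_irdfWeight_of_adj hf hab

end

theorem IsSpiderPartition.exists_adj {V : Type*} {G : SimpleGraph V} {l : ℕ} {c s : Fin l → V} {R : Finset V}
    (h : IsSpiderPartition G c s R) : ∃ a b, G.Adj a b := by
  obtain ⟨hl, -, -, -, -, hclique, -⟩ := h
  exact ⟨c ⟨0, by omega⟩, c ⟨1, hl⟩, hclique _ _ (by simp [Fin.ext_iff])⟩

theorem indepDomNum_lt_iR_spider_general {V : Type*} [Fintype V]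
    (G : SimpleGraph V) {l : ℕ} (c s : Fin l → V) (R : Finset V)
    (hspider : IsThinSpider G c s R ∨ IsThickSpider G c s R) :
    indepDomNum G < iR G := by
  have hpartition : IsSpiderPartition G c s R := hspider.elim (·.1) (·.1)
  obtain ⟨a, b, hab⟩ := hpartition.exists_adj
  exact indepDomNum_lt_iR_of_adj hab

/-- a spider (thin or thick) with nonempty head satisfies
`i(G) < i_R(G)`. -/
theorem indepDomNum_lt_iR_spider {V : Type*} [Fintype V] [DecidableEq V]
    (G : SimpleGraph V) {l : ℕ} (c s : Fin l → V) (R : Finset V)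
    (hspider : IsThinSpider G c s R ∨ IsThickSpider G c s R) (hR : R.Nonempty) :
    indepDomNum G < iR G :=
  indepDomNum_lt_iR_spider_general G c s R hspider
end

section
/- Let G be the join of graphs G_1 and G_2 and let f be an IRDF of G. Then either f vanishes on all of V(G_1) and the restriction of f to G_2 is an IRDF of G_2, or f vanishes on all of V(G_2) and the restriction of f to G_1 is an IRDF of G_1. -/
/-- The disjoint union of two graphs, on the sum type. -/
def disjUnionGraph {V₁ V₂ : Type*} (G₁ : SimpleGraph V₁) (G₂ : SimpleGraph V₂) :
    SimpleGraph (V₁ ⊕ V₂) where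
  Adj a b :=
    match a, b with
    | .inl u, .inl v => G₁.Adj u v
    | .inr u, .inr v => G₂.Adj u v
    | _, _ => False
  symm := by
    constructor
    rintro (u | u) (v | v) h
    · exact G₁.adj_symm h
    · exact h.elim
    · exact h.elim
    · exact G₂.adj_symm h
  loopless := by
    constructor
    rintro (u | u) h
    · exact G₁.irrefl h
    · exact G₂.irrefl h

/-- The join of two graphs: their disjoint union together with all edges
between the two parts. -/
def joinGraph {V₁ V₂ : Type*} (G₁ : SimpleGraph V₁) (G₂ : SimpleGraph V₂) :
    SimpleGraph (V₁ ⊕ V₂) where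
  Adj a b :=
    match a, b with
    | .inl u, .inl v => G₁.Adj u v
    | .inr u, .inr v => G₂.Adj u v
    | .inl _, .inr _ => True
    | .inr _, .inl _ => True
  symm := by
    constructor
    rintro (u | u) (v | v) h
    · exact G₁.adj_symm h
    · trivial
    · trivial
    · exact G₂.adj_symm h
  loopless := by
    constructor
    rintro (u | u) h
    · exact G₁.irrefl h
    · exact G₂.irrefl h

/-- an IRDF of a join vanishes on one side and restricts to an IRDF
of the other side. -/
theorem irdf_join {V₁ V₂ : Type*} (G₁ : SimpleGraph V₁) (G₂ : SimpleGraph V₂)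
    (f : V₁ ⊕ V₂ → ℕ) (hf : IsIRDF (joinGraph G₁ G₂) f) :
    ((∀ v : V₁, f (.inl v) = 0) ∧ IsIRDF G₂ (fun v => f (.inr v))) ∨
    ((∀ v : V₂, f (.inr v) = 0) ∧ IsIRDF G₁ (fun v => f (.inl v))) := by
  obtain ⟨hb, hdom, hind⟩ := hf
  by_cases h₁ : ∀ v : V₁, f (.inl v) = 0
  · left
    refine ⟨h₁, fun v => hb _, ?_, fun u v huv => hind (.inr u) (.inr v) huv⟩
    intro v hv
    obtain ⟨u, hadj, hu⟩ := hdom (.inr v) hv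
    cases u with
    | inl u => exact absurd (h₁ u) (by omega)
    | inr u => exact ⟨u, hadj, hu⟩
  · right
    push_neg at h₁
    obtain ⟨w, hw⟩ := h₁
    have h₂ : ∀ v : V₂, f (.inr v) = 0 := fun v =>
      (hind (.inl w) (.inr v) trivial).resolve_left hw
    refine ⟨h₂, fun v => hb _, ?_, fun u v huv => hind (.inl u) (.inl v) huv⟩
    intro v hv
    obtain ⟨u, hadj, hu⟩ := hdom (.inl v) hv
    cases u with
    | inl u => exact ⟨u, hadj, hu⟩
    | inr u => exact absurd (h₂ u) (by omega)
end

section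
/- If G is the join of graphs G_1 and G_2 with E(G_1) = ∅ and E(G_2) ≠ ∅, then i_R(G) = min{|V(G_1)| + 1, i_R(G_2)}. -/
lemma exists_isIRDF {V : Type*} [Fintype V] (G : SimpleGraph V) :
    ∃ f : V → ℕ, IsIRDF G f := by
  classical
  obtain ⟨b, hb, hmax⟩ := Finset.exists_max_image
    ((Finset.univ : Finset (Finset V)).filter
      (fun t => ∀ u ∈ t, ∀ v ∈ t, ¬ G.Adj u v)) Finset.card
    ⟨∅, by simp⟩
  simp only [Finset.mem_filter, Finset.mem_univ, true_and] at hb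
  refine ⟨fun v => if v ∈ b then 2 else 0, ?_, ?_, ?_⟩
  · intro v; by_cases h : v ∈ b <;> simp [h]
  · intro v hv
    have hvb : v ∉ b := by intro h; simp [h] at hv
    by_contra hno
    push_neg at hno
    have key : ∀ u ∈ b, ¬ G.Adj v u := fun u hu hadj =>
      hno u hadj (by simp [hu])
    have hins : ∀ u ∈ insert v b, ∀ w ∈ insert v b, ¬ G.Adj u w := by
      intro a ha c hc hadj
      rcases Finset.mem_insert.1 ha with h | ha'
      · rcases Finset.mem_insert.1 hc with h' | hc'
        · rw [h, h'] at hadj; exact G.irrefl hadj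
        · rw [h] at hadj; exact key c hc' hadj
      · rcases Finset.mem_insert.1 hc with h' | hc'
        · rw [h'] at hadj; exact key a ha' hadj.symm
        · exact hb a ha' c hc' hadj
    have := hmax (insert v b)
      (Finset.mem_filter.2 ⟨Finset.mem_univ _, hins⟩)
    rw [Finset.card_insert_of_notMem hvb] at this
    omega
  · intro u v hadj
    by_cases hub : u ∈ b
    · by_cases hvb : v ∈ b
      · exact absurd hadj (hb u hub v hvb)
      · right; simp [hvb]
    · left; simp [hub]

/-- if `G₁` is edgeless and nonempty and `G₂` has an edge, then the
join satisfies `i_R(G) = min{|V(G₁)| + 1, i_R(G₂)}`. -/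
theorem iR_join_edgeless_left {V₁ V₂ : Type*} [Fintype V₁] [Fintype V₂]
    [Nonempty V₁]
    (G₁ : SimpleGraph V₁) (G₂ : SimpleGraph V₂)
    (h₁ : ∀ u v : V₁, ¬ G₁.Adj u v) (h₂ : ∃ u v : V₂, G₂.Adj u v) :
    iR (joinGraph G₁ G₂) = min (Fintype.card V₁ + 1) (iR G₂) := by
  classical
  obtain ⟨x₀⟩ := ‹Nonempty V₁›
  obtain ⟨u₀, v₀, he⟩ := h₂
  set G := joinGraph G₁ G₂ with hGdef
  -- Witness 1: 2 on x₀, 1 on rest of V₁, 0 on V₂.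
  have w1 : (Fintype.card V₁ + 1) ∈
      {w | ∃ f : V₁ ⊕ V₂ → ℕ, IsIRDF G f ∧ irdfWeight f = w} := by
    refine ⟨Sum.elim (fun y => (if y = x₀ then 1 else 0) + 1) (fun _ => 0),
      ⟨?_, ?_, ?_⟩, ?_⟩
    · rintro (y | v)
      · simp only [Sum.elim_inl]; split <;> omega
      · simp
    · rintro (y | v) hv
      · exact absurd hv (by simp only [Sum.elim_inl]; omega)
      · exact ⟨Sum.inl x₀, trivial, by simp⟩
    · rintro (u | u) (v | v) hadj
      · exact absurd hadj (h₁ u v)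
      · right; rfl
      · left; rfl
      · left; rfl
    · simp [irdfWeight, Fintype.sum_sum_type, Finset.sum_add_distrib,
        Finset.sum_ite_eq, add_comm]
  -- An optimal IRDF of G₂
  have hne2 : {w | ∃ f : V₂ → ℕ, IsIRDF G₂ f ∧ irdfWeight f = w}.Nonempty := by
    obtain ⟨f, hf⟩ := exists_isIRDF G₂
    exact ⟨_, f, hf, rfl⟩
  obtain ⟨g, hg, hgw⟩ := Nat.sInf_mem hne2
  have hz : ∃ z, g z = 2 := by
    rcases hg.2.2 u₀ v₀ he with h0 | h0
    · obtain ⟨w, _, hw⟩ := hg.2.1 u₀ h0; exact ⟨w, hw⟩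
    · obtain ⟨w, _, hw⟩ := hg.2.1 v₀ h0; exact ⟨w, hw⟩
  obtain ⟨z₂, hz₂⟩ := hz
  -- Witness 2: 0 on V₁, g on V₂.
  have w2 : (iR G₂) ∈
      {w | ∃ f : V₁ ⊕ V₂ → ℕ, IsIRDF G f ∧ irdfWeight f = w} := by
    refine ⟨Sum.elim (fun _ => 0) g, ⟨?_, ?_, ?_⟩, ?_⟩
    · rintro (y | v)
      · simp
      · exact hg.1 v
    · rintro (y | v) hv
      · exact ⟨Sum.inr z₂, trivial, hz₂⟩
      · obtain ⟨u, hadj, hu⟩ := hg.2.1 v hv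
        exact ⟨Sum.inr u, hadj, hu⟩
    · rintro (u | u) (v | v) hadj
      · left; rfl
      · left; rfl
      · right; rfl
      · exact hg.2.2 u v hadj
    · show (∑ a : V₁ ⊕ V₂, Sum.elim (fun _ => 0) g a) = iR G₂
      rw [Fintype.sum_sum_type]
      simpa [irdfWeight, iR] using hgw
  have hub : iR G ≤ min (Fintype.card V₁ + 1) (iR G₂) :=
    le_min (Nat.sInf_le w1) (Nat.sInf_le w2)
  have hlb : min (Fintype.card V₁ + 1) (iR G₂) ≤ iR G := by
    apply le_csInf ⟨_, w1⟩
    rintro w ⟨f, ⟨hb, hdom, hind⟩, rfl⟩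
    by_cases hA : ∀ y : V₁, f (Sum.inl y) = 0
    · -- restriction to V₂ is an IRDF of G₂
      have hg2 : IsIRDF G₂ (fun v => f (Sum.inr v)) := by
        refine ⟨fun v => hb _, ?_, fun u v hadj => hind _ _ hadj⟩
        intro v hv
        obtain ⟨u, hadj, hu⟩ := hdom (Sum.inr v) hv
        cases u with
        | inl y => rw [hA y] at hu; omega
        | inr u => exact ⟨u, hadj, hu⟩
      calc min (Fintype.card V₁ + 1) (iR G₂) ≤ iR G₂ := min_le_right _ _
        _ ≤ irdfWeight (fun v => f (Sum.inr v)) := Nat.sInf_le ⟨_, hg2, rfl⟩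
        _ ≤ irdfWeight f := by
            rw [irdfWeight, irdfWeight, Fintype.sum_sum_type]
            exact Nat.le_add_left _ _
    · push_neg at hA
      obtain ⟨x, hx⟩ := hA
      have hV2zero : ∀ v : V₂, f (Sum.inr v) = 0 := fun v =>
        (hind (Sum.inl x) (Sum.inr v) trivial).resolve_left hx
      have hy : ∃ y : V₁, f (Sum.inl y) = 2 := by
        obtain ⟨u, hadj, hu⟩ := hdom (Sum.inr u₀) (hV2zero u₀)
        cases u with
        | inl y => exact ⟨y, hu⟩
        | inr u => rw [hV2zero u] at hu; omega
      obtain ⟨y, hy2⟩ := hy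
      have hpos : ∀ z : V₁, 1 ≤ f (Sum.inl z) := by
        intro z
        rcases Nat.eq_zero_or_pos (f (Sum.inl z)) with h0 | h
        · obtain ⟨u, hadj, hu⟩ := hdom (Sum.inl z) h0
          cases u with
          | inl w => exact absurd hadj (h₁ z w)
          | inr w => rw [hV2zero w] at hu; omega
        · exact h
      have hcard : (Finset.univ.erase y).card = Fintype.card V₁ - 1 := by
        simp [Finset.card_erase_of_mem]
      have hcardpos : 1 ≤ Fintype.card V₁ := Fintype.card_pos
      have h1 : Fintype.card V₁ + 1 ≤ ∑ z : V₁, f (Sum.inl z) := by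
        calc Fintype.card V₁ + 1 = (Finset.univ.erase y).card + 2 := by
              rw [hcard]; omega
          _ ≤ (∑ z ∈ Finset.univ.erase y, f (Sum.inl z)) + f (Sum.inl y) := by
              apply Nat.add_le_add
              · rw [Finset.card_eq_sum_ones]
                exact Finset.sum_le_sum (fun z _ => hpos z)
              · omega
          _ = ∑ z : V₁, f (Sum.inl z) :=
              Finset.sum_erase_add _ _ (Finset.mem_univ y)
      calc min (Fintype.card V₁ + 1) (iR G₂) ≤ Fintype.card V₁ + 1 :=
            min_le_left _ _
        _ ≤ ∑ z : V₁, f (Sum.inl z) := h1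
        _ ≤ irdfWeight f := by
            rw [irdfWeight, Fintype.sum_sum_type]
            exact Nat.le_add_right _ _
  exact le_antisymm hub hlb
end
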